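/- arXiv:1411.5063 — 7 statements merged into one kernel-verified Lean document; each statement's English description precedes it below -/
import Mathlib

section
/- Let d ≥ 4 and let f₂ = x₀^{d-1}x₁ + x₂^d ∈ ℂ[x₀,x₁,x₂]. A homogeneous polynomial g of degree 2 in ℂ[y₀,y₁,y₂] annihilates f₂ (i.e. g(∂₀,∂₁,∂₂)f₂ = 0) if and only if g lies in the ℂ-linear span of the three quadrics y₀y₂, y₁², y₁y₂. -/
/-!
Apolarity `g ↦ g(∂) f` is linear in `g`, and a quadric `g` splits along the monomial basis into a
part in `span {y₀y₂, y₁², y₁y₂}` and a part `a y₀² + b y₀y₁ + c y₂²`. The first part kills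
`f = x₀^(d-1) x₁ + x₂^d`, since `∂₀∂₂ f = ∂₁² f = ∂₁∂₂ f = 0`; the second one is sent to
`a (d-1)(d-2) x₀^(d-3) x₁ + b (d-1) x₀^(d-2) + c d(d-1) x₂^(d-2)`, three distinct monomials with
nonzero coefficients as soon as `d ≥ 3`. By the modular law in the lattice of submodules, the
quadrics annihilating `f` are then exactly the first span.
-/

open MvPolynomial

/-- The differential action of `g ∈ ℂ[y₀,…,y_{n-1}]` on `f ∈ ℂ[x₀,…,x_{n-1}]`:
`g(∂₀,…,∂_{n-1}) f`, obtained by substituting the partial derivative `∂/∂xᵢ` for `yᵢ`. -/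
noncomputable def diffOp {n : ℕ} (g f : MvPolynomial (Fin n) ℂ) : MvPolynomial (Fin n) ℂ :=
  g.support.sum fun m =>
    g.coeff m •
      ((List.ofFn fun i : Fin n =>
        ((MvPolynomial.pderiv i).toLinearMap ^ (m i) :
          Module.End ℂ (MvPolynomial (Fin n) ℂ))).prod f)

open Submodule

section DiffOp

variable {n : ℕ}

noncomputable def iteratedPDeriv (m : Fin n →₀ ℕ) : Module.End ℂ (MvPolynomial (Fin n) ℂ) :=
  (List.ofFn fun i : Fin n => ((pderiv i).toLinearMap ^ (m i) :
    Module.End ℂ (MvPolynomial (Fin n) ℂ))).prod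

noncomputable def diffOpLinear (f : MvPolynomial (Fin n) ℂ) :
    MvPolynomial (Fin n) ℂ →ₗ[ℂ] MvPolynomial (Fin n) ℂ :=
  (basisMonomials (Fin n) ℂ).constr ℂ fun m => iteratedPDeriv m f

theorem diffOp_eq_diffOpLinear (g f : MvPolynomial (Fin n) ℂ) :
    diffOp g f = diffOpLinear f g := by
  rw [diffOpLinear, Module.Basis.constr_apply]
  rfl

theorem diffOpLinear_monomial (m : Fin n →₀ ℕ) (c : ℂ) (f : MvPolynomial (Fin n) ℂ) :
    diffOpLinear f (monomial m c) = c • iteratedPDeriv m f := by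
  have : monomial m c = c • basisMonomials (Fin n) ℂ m := by simp [smul_monomial]
  rw [this, map_smul, diffOpLinear, Module.Basis.constr_basis]

end DiffOp

theorem iteratedPDeriv_fin_three_apply (m : Fin 3 →₀ ℕ) (f : MvPolynomial (Fin 3) ℂ) :
    iteratedPDeriv m f = (pderiv 0)^[m 0] ((pderiv 1)^[m 1] ((pderiv 2)^[m 2] f)) := by
  simp [iteratedPDeriv, List.ofFn_succ, Module.End.mul_apply, Module.End.pow_apply]

theorem diffOpLinear_X_mul_X {i j : Fin 3} (hij : i ≤ j) (f : MvPolynomial (Fin 3) ℂ) :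
    diffOpLinear f (X i * X j) = pderiv i (pderiv j f) := by
  rw [X, X, monomial_mul, diffOpLinear_monomial, one_mul, one_smul,
    iteratedPDeriv_fin_three_apply]
  fin_cases i <;> fin_cases j <;> simp_all

theorem monomial_one_eq_fin_three {R : Type*} [CommSemiring R] (m : Fin 3 →₀ ℕ) :
    monomial m (1 : R) = X 0 ^ m 0 * X 1 ^ m 1 * X 2 ^ m 2 := by
  rw [monomial_eq, C_1, one_mul, Finsupp.prod_fintype _ _ fun _ => pow_zero _, Fin.prod_univ_three]

theorem mem_span_sup_of_isHomogeneous_two {R : Type*} [CommSemiring R]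
    {g : MvPolynomial (Fin 3) R} (hg : g.IsHomogeneous 2) :
    g ∈ span R {X 0 * X 2, X 1 ^ 2, X 1 * X 2} ⊔ span R {X 0 ^ 2, X 0 * X 1, X 2 ^ 2} := by
  rw [← span_union, g.as_sum]
  refine sum_mem fun m hm => ?_
  have hdeg : m 0 + m 1 + m 2 = 2 := by
    simpa [Finsupp.weight_apply, Finsupp.sum_fintype, Fin.sum_univ_three] using
      hg (mem_support_iff.mp hm)
  rw [show monomial m (coeff m g) = coeff m g • monomial m 1 by simp [smul_monomial],
    monomial_one_eq_fin_three]
  refine smul_mem _ _ ?_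
  obtain ⟨a, b, c, ha, hb, hc⟩ : ∃ a b c, m 0 = a ∧ m 1 = b ∧ m 2 = c := ⟨_, _, _, rfl, rfl, rfl⟩
  rw [ha, hb, hc] at hdeg ⊢
  have : a ≤ 2 := by omega
  have : b ≤ 2 := by omega
  have : c ≤ 2 := by omega
  interval_cases a <;> interval_cases b <;> interval_cases c <;>
    first | omega | exact subset_span (by simp)

/-- `f₂` in degree `d = e + 3`, so that `d ≥ 3` holds by construction. -/
noncomputable def f₂Poly (e : ℕ) : MvPolynomial (Fin 3) ℂ := X 0 ^ (e + 2) * X 1 + X 2 ^ (e + 3)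

section f₂Poly

variable (e : ℕ)

theorem pderiv_zero_f₂Poly : pderiv 0 (f₂Poly e) = C ((e : ℂ) + 2) * (X 0 ^ (e + 1) * X 1) := by
  simp [f₂Poly, map_ofNat C]; ring

theorem pderiv_one_f₂Poly : pderiv 1 (f₂Poly e) = X 0 ^ (e + 2) := by
  simp [f₂Poly]

theorem pderiv_two_f₂Poly : pderiv 2 (f₂Poly e) = C ((e : ℂ) + 3) * X 2 ^ (e + 2) := by
  simp [f₂Poly, map_ofNat C]

theorem span_le_ker_diffOpLinear_f₂Poly :
    span ℂ {X 0 * X 2, X 1 ^ 2, X 1 * X 2} ≤ LinearMap.ker (diffOpLinear (f₂Poly e)) := by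
  simp only [span_le, Set.insert_subset_iff, Set.singleton_subset_iff, SetLike.mem_coe,
    LinearMap.mem_ker, sq]
  refine ⟨?_, ?_, ?_⟩ <;> rw [diffOpLinear_X_mul_X (by decide)]
  · simp [pderiv_two_f₂Poly]
  · simp [pderiv_one_f₂Poly]
  · simp [pderiv_two_f₂Poly]

theorem diffOpLinear_f₂Poly_apply (a b c : ℂ) :
    diffOpLinear (f₂Poly e) (a • X 0 ^ 2 + b • (X 0 * X 1) + c • X 2 ^ 2) =
      (a * ((e + 2) * (e + 1))) • (X 0 ^ e * X 1) + (b * (e + 2)) • X 0 ^ (e + 1) +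
        (c * ((e + 3) * (e + 2))) • X 2 ^ (e + 1) := by
  simp only [map_add, map_smul, sq]
  rw [diffOpLinear_X_mul_X (by decide), diffOpLinear_X_mul_X (by decide),
    diffOpLinear_X_mul_X (by decide), pderiv_zero_f₂Poly, pderiv_one_f₂Poly, pderiv_two_f₂Poly,
    pderiv_C_mul, pderiv_C_mul]
  simp [map_ofNat C, smul_eq_C_mul]
  ring

theorem span_inf_ker_diffOpLinear_f₂Poly :
    span ℂ {X 0 ^ 2, X 0 * X 1, X 2 ^ 2} ⊓ LinearMap.ker (diffOpLinear (f₂Poly e)) = ⊥ := by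
  refine eq_bot_iff.mpr fun y ⟨hy, hker⟩ => ?_
  obtain ⟨a, b, c, rfl⟩ := mem_span_triple.mp hy
  rw [SetLike.mem_coe, LinearMap.mem_ker, diffOpLinear_f₂Poly_apply] at hker
  have ha := congrArg (coeff (Finsupp.single 0 e + Finsupp.single 1 1)) hker
  have hb := congrArg (coeff (Finsupp.single 0 (e + 1))) hker
  have hc := congrArg (coeff (Finsupp.single 2 (e + 1))) hker
  simp [coeff_X_pow, coeff_mul_X', Finsupp.ext_iff, Fin.forall_fin_succ, Finsupp.single_apply]
    at ha hb hc
  norm_cast at ha hb hc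
  simp only [or_false] at ha hb hc
  simp [ha, hb, hc]

theorem diffOp_f₂Poly_eq_zero_iff {g : MvPolynomial (Fin 3) ℂ} (hg : g.IsHomogeneous 2) :
    diffOp g (f₂Poly e) = 0 ↔ g ∈ span ℂ {X 0 * X 2, X 1 ^ 2, X 1 * X 2} := by
  rw [diffOp_eq_diffOpLinear, ← LinearMap.mem_ker]
  refine ⟨fun hker => ?_, fun hg => span_le_ker_diffOpLinear_f₂Poly e hg⟩
  rw [← sup_bot_eq (span ℂ _), ← span_inf_ker_diffOpLinear_f₂Poly e,
    ← sup_inf_assoc_of_le _ (span_le_ker_diffOpLinear_f₂Poly e)]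
  exact ⟨mem_span_sup_of_isHomogeneous_two hg, hker⟩

end f₂Poly

theorem stmt_0 (d : ℕ) (hd : 4 ≤ d)
    (f₂ : MvPolynomial (Fin 3) ℂ) (hf₂ : f₂ = X 0 ^ (d - 1) * X 1 + X 2 ^ d)
    (g : MvPolynomial (Fin 3) ℂ) (hg : g.IsHomogeneous 2) :
    diffOp g f₂ = 0 ↔
      g ∈ Submodule.span ℂ
        ({X 0 * X 2, X 1 ^ 2, X 1 * X 2} : Set (MvPolynomial (Fin 3) ℂ)) := by
  obtain ⟨e, rfl⟩ : ∃ e, d = e + 3 := ⟨d - 3, by omega⟩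
  subst hf₂
  exact diffOp_f₂Poly_eq_zero_iff e hg
end

section
/- Let d ≥ 4, f₂ = x₀^{d-1}x₁ + x₂^d ∈ ℂ[x₀,x₁,x₂], and let t be an integer with 2 ≤ t ≤ d−1. A homogeneous polynomial g of degree t in ℂ[y₀,y₁,y₂] annihilates f₂ (i.e. g(∂₀,∂₁,∂₂)f₂ = 0) if and only if g belongs to the ideal generated by y₀y₂, y₁², y₁y₂; equivalently, the degree-t part of the apolar ideal f₂^⊥ equals the degree-t part of the ideal (y₀y₂, y₁², y₁y₂). -/
open MvPolynomial

/-!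
On monomials, `∂^m x^μ` is a nonzero multiple of `x^(μ - m)` if `m ≤ μ` and vanishes otherwise, so
`g(∂) x^μ = 0` iff no monomial of `g` divides `x^μ`. The monomials `x₀^(d-1) x₁` and `x₂^d` of `f₂`
involve disjoint variables, so their images under `g(∂)` can only share the constant monomial, and
its coefficient in the first image is a multiple of the coefficient of `y₀^(d-1) y₁` in `g`, which
vanishes as `deg g < d`. Hence `g(∂) f₂ = 0` iff no monomial of `g` divides `x₀^(d-1) x₁` or `x₂^d`.
In degree `≤ d - 1` these are exactly the monomials divisible by none of `y₀y₂, y₁², y₁y₂`, and the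
span of those is a monomial ideal.
-/

section Pderiv

variable {σ R : Type*} [CommSemiring R]

theorem pderiv_pow_monomial (i : σ) (k : ℕ) (μ : σ →₀ ℕ) (c : R) :
    ((pderiv i).toLinearMap ^ k : Module.End R (MvPolynomial σ R)) (monomial μ c) =
      monomial (μ - Finsupp.single i k) (c * (μ i).descFactorial k) := by
  classical
  induction k with
  | zero => simp
  | succ k ih =>
    rw [pow_succ', Module.End.mul_apply, ih]
    simp only [Derivation.coeFn_coe, pderiv_monomial, tsub_tsub, ← Finsupp.single_add,
      Finsupp.tsub_apply, Finsupp.single_eq_same, Nat.descFactorial_succ]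
    push_cast
    ring_nf

theorem list_prod_pderiv_pow_monomial [DecidableEq σ] (m : σ →₀ ℕ) (l : List σ) (hl : l.Nodup)
    (μ : σ →₀ ℕ) (c : R) :
    (l.map fun i => ((pderiv i).toLinearMap ^ m i : Module.End R (MvPolynomial σ R))).prod
        (monomial μ c) =
      monomial (μ - ∑ i ∈ l.toFinset, Finsupp.single i (m i))
        (c * ∏ i ∈ l.toFinset, (μ i).descFactorial (m i)) := by
  induction l with
  | nil => simp
  | cons j l ih =>
    obtain ⟨hj, hl⟩ := List.nodup_cons.mp hl
    have hj' : j ∉ l.toFinset := by simpa using hj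
    have hμj : (μ - ∑ i ∈ l.toFinset, Finsupp.single i (m i)) j = μ j := by
      simp [Finsupp.tsub_apply, Finsupp.finsetSum_apply, Finsupp.single_apply, hj]
    rw [List.map_cons, List.prod_cons, Module.End.mul_apply, ih hl, pderiv_pow_monomial, hμj,
      List.toFinset_cons, Finset.sum_insert hj', Finset.prod_insert hj', tsub_tsub, add_comm]
    push_cast
    ring_nf

end Pderiv

theorem MvPolynomial.forall_le_coeff_eq_zero_iff {σ R : Type*} [CommSemiring R]
    (g : MvPolynomial σ R) (μ : σ →₀ ℕ) :
    (∀ m ≤ μ, coeff m g = 0) ↔ ∀ m ∈ g.support, ¬ m ≤ μ := by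
  simp only [mem_support_iff, ne_eq, not_imp_not]

theorem Finsupp.prod_descFactorial_eq_zero_iff {σ : Type*} [Fintype σ] (m μ : σ →₀ ℕ) :
    ∏ i, (μ i).descFactorial (m i) = 0 ↔ ¬ m ≤ μ := by
  simp [Finset.prod_eq_zero_iff, Nat.descFactorial_eq_zero_iff_lt, Finsupp.le_def]

theorem MvPolynomial.add_eq_zero_iff_of_disjoint_support {σ R : Type*} [CommSemiring R]
    {p q : MvPolynomial σ R} (h : Disjoint p.support q.support) :
    p + q = 0 ↔ p = 0 ∧ q = 0 := by
  refine ⟨fun hpq => ?_, fun ⟨hp, hq⟩ => by rw [hp, hq, add_zero]⟩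
  have hp : p = 0 := by
    ext ν
    by_contra hν
    have hq : ν ∉ q.support := h.notMem_of_mem_left_finset (mem_support_iff.mpr hν)
    rw [notMem_support_iff] at hq
    exact hν (by simpa [hq] using congr_arg (coeff ν) hpq)
  exact ⟨hp, by simpa [hp] using hpq⟩

section DiffOp

variable {n : ℕ}

noncomputable def pderivPow (m : Fin n →₀ ℕ) : Module.End ℂ (MvPolynomial (Fin n) ℂ) :=
  (List.ofFn fun i : Fin n =>
    ((pderiv i).toLinearMap ^ (m i) : Module.End ℂ (MvPolynomial (Fin n) ℂ))).prod

theorem diffOp_eq_sum (g f : MvPolynomial (Fin n) ℂ) :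
    diffOp g f = ∑ m ∈ g.support, coeff m g • pderivPow m f :=
  rfl

theorem pderivPow_monomial (m μ : Fin n →₀ ℕ) (c : ℂ) :
    pderivPow m (monomial μ c) =
      monomial (μ - m) (c * ∏ i, (μ i).descFactorial (m i)) := by
  rw [pderivPow, List.ofFn_eq_map,
    list_prod_pderiv_pow_monomial m _ (List.nodup_finRange n), List.toFinset_finRange,
    Finsupp.univ_sum_single]

theorem diffOp_add_right (g f₁ f₂ : MvPolynomial (Fin n) ℂ) :
    diffOp g (f₁ + f₂) = diffOp g f₁ + diffOp g f₂ := by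
  simp only [diffOp_eq_sum, map_add, smul_add, Finset.sum_add_distrib]

theorem diffOp_monomial_eq_sum (g : MvPolynomial (Fin n) ℂ) (μ : Fin n →₀ ℕ) (c : ℂ) :
    diffOp g (monomial μ c) = ∑ m ∈ g.support,
      monomial (μ - m) (coeff m g * (c * ∏ i, (μ i).descFactorial (m i))) := by
  simp only [diffOp_eq_sum, pderivPow_monomial, smul_monomial, smul_eq_mul]

theorem le_of_mem_support_diffOp_monomial {g : MvPolynomial (Fin n) ℂ} {μ ν : Fin n →₀ ℕ}
    {c : ℂ} (hν : ν ∈ (diffOp g (monomial μ c)).support) : ν ≤ μ := by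
  classical
  rw [diffOp_monomial_eq_sum] at hν
  obtain ⟨m, -, hm⟩ := Finset.mem_biUnion.mp (support_sum hν)
  rw [Finset.mem_singleton.mp (support_monomial_subset hm)]
  exact tsub_le_self

theorem coeff_tsub_diffOp_monomial (g : MvPolynomial (Fin n) ℂ) {m μ : Fin n →₀ ℕ} (hm : m ≤ μ)
    (c : ℂ) :
    coeff (μ - m) (diffOp g (monomial μ c)) =
      coeff m g * (c * ∏ i, (μ i).descFactorial (m i)) := by
  classical
  rw [diffOp_monomial_eq_sum, coeff_sum]
  refine (Finset.sum_eq_single m (fun m' _ hm' => ?_) fun hm => ?_).trans (by simp)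
  · by_cases hm'μ : m' ≤ μ
    · rw [coeff_monomial, if_neg (fun h => hm' (tsub_inj_right hm'μ hm h))]
    · rw [← Finsupp.prod_descFactorial_eq_zero_iff] at hm'μ
      simp [hm'μ]
  · simp [notMem_support_iff.mp hm]

theorem diffOp_monomial_one_eq_zero_iff (g : MvPolynomial (Fin n) ℂ) (μ : Fin n →₀ ℕ) :
    diffOp g (monomial μ 1) = 0 ↔ ∀ m ≤ μ, coeff m g = 0 := by
  refine ⟨fun h m hm => ?_, fun h => ?_⟩
  · have hprod : (∏ i, (μ i).descFactorial (m i) : ℂ) ≠ 0 := by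
      exact_mod_cast (Finsupp.prod_descFactorial_eq_zero_iff m μ).not.mpr (not_not.mpr hm)
    simpa [hprod, h] using (coeff_tsub_diffOp_monomial g hm 1).symm
  · rw [diffOp_monomial_eq_sum]
    refine Finset.sum_eq_zero fun m _ => ?_
    by_cases hm : m ≤ μ
    · simp [h m hm]
    · rw [← Finsupp.prod_descFactorial_eq_zero_iff] at hm
      simp [hm]

theorem diffOp_monomial_add_monomial_eq_zero_iff (g : MvPolynomial (Fin n) ℂ)
    {μ₁ μ₂ : Fin n →₀ ℕ} (hμ : μ₁ ⊓ μ₂ = 0) (hg : coeff μ₁ g = 0) :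
    diffOp g (monomial μ₁ 1 + monomial μ₂ 1) = 0 ↔
      (∀ m ≤ μ₁, coeff m g = 0) ∧ ∀ m ≤ μ₂, coeff m g = 0 := by
  rw [diffOp_add_right, add_eq_zero_iff_of_disjoint_support, diffOp_monomial_one_eq_zero_iff,
    diffOp_monomial_one_eq_zero_iff]
  refine Finset.disjoint_left.mpr fun ν h₁ h₂ => ?_
  have hν : ν = 0 := nonpos_iff_eq_zero.mp <|
    hμ ▸ le_inf (le_of_mem_support_diffOp_monomial h₁) (le_of_mem_support_diffOp_monomial h₂)
  subst hν
  refine mem_support_iff.mp h₁ ?_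
  simpa [hg] using coeff_tsub_diffOp_monomial g (le_refl μ₁) (1 : ℂ)

end DiffOp

section Fin3

open Finsupp

def generatorExponents : Set (Fin 3 →₀ ℕ) :=
  {single 0 1 + single 2 1, single 1 2, single 1 1 + single 2 1}

theorem span_generators_eq :
    Ideal.span ({X 0 * X 2, X 1 ^ 2, X 1 * X 2} : Set (MvPolynomial (Fin 3) ℂ)) =
      Ideal.span ((fun s => monomial s (1 : ℂ)) '' generatorExponents) := by
  simp only [generatorExponents, Set.image_insert_eq, Set.image_singleton, monomial_single_add,
    ← X_pow_eq_monomial, pow_one]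

theorem exists_generatorExponents_le_iff {d : ℕ} {m : Fin 3 →₀ ℕ} (hm : m.degree ≤ d - 1) :
    (∃ s ∈ generatorExponents, s ≤ m) ↔
      ¬ m ≤ single 0 (d - 1) + single 1 1 ∧ ¬ m ≤ single 2 d := by
  rw [degree_eq_sum, Fin.sum_univ_three] at hm
  simp only [generatorExponents, Set.mem_insert_iff, Set.mem_singleton_iff, exists_eq_or_imp,
    exists_eq_left, le_def, Fin.forall_fin_succ, IsEmpty.forall_iff, and_true, Finsupp.coe_add,
    Pi.add_apply, single_apply, Fin.succ_zero_eq_one, Fin.succ_one_eq_two, Fin.reduceEq, if_true,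
    if_false]
  omega

theorem X_pow_mul_X_add_X_pow_eq (d : ℕ) :
    (X 0 ^ (d - 1) * X 1 + X 2 ^ d : MvPolynomial (Fin 3) ℂ) =
      monomial (single 0 (d - 1) + single 1 1) 1 + monomial (single 2 d) 1 := by
  rw [monomial_single_add, ← X_pow_eq_monomial, ← X_pow_eq_monomial, pow_one]

end Fin3

theorem stmt_1_general (d : ℕ)
    (f₂ : MvPolynomial (Fin 3) ℂ) (hf₂ : f₂ = X 0 ^ (d - 1) * X 1 + X 2 ^ d)
    (t : ℕ) (ht' : t ≤ d - 1)
    (g : MvPolynomial (Fin 3) ℂ) (hg : g.IsHomogeneous t) :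
    diffOp g f₂ = 0 ↔
      g ∈ Ideal.span ({X 0 * X 2, X 1 ^ 2, X 1 * X 2} : Set (MvPolynomial (Fin 3) ℂ)) := by
  have hdeg : ∀ m ∈ g.support, m.degree ≤ d - 1 := fun m hm =>
    (not_not.mp fun h => mem_support_iff.mp hm (hg.coeff_eq_zero h)).trans_le ht'
  have hμ₁ : coeff (Finsupp.single 0 (d - 1) + Finsupp.single 1 1) g = 0 := by
    refine hg.coeff_eq_zero ?_
    rw [map_add, Finsupp.degree_single, Finsupp.degree_single]
    omega
  have hdisj : (Finsupp.single 0 (d - 1) + Finsupp.single 1 1 : Fin 3 →₀ ℕ) ⊓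
      Finsupp.single 2 d = 0 := by
    ext i; fin_cases i <;> simp
  rw [hf₂, X_pow_mul_X_add_X_pow_eq, diffOp_monomial_add_monomial_eq_zero_iff g hdisj hμ₁,
    forall_le_coeff_eq_zero_iff, forall_le_coeff_eq_zero_iff, ← forall₂_and, span_generators_eq,
    mem_ideal_span_monomial_image]
  exact forall₂_congr fun m hm => (exists_generatorExponents_le_iff (hdeg m hm)).symm

theorem stmt_1 (d : ℕ) (hd : 4 ≤ d)
    (f₂ : MvPolynomial (Fin 3) ℂ) (hf₂ : f₂ = X 0 ^ (d - 1) * X 1 + X 2 ^ d)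
    (t : ℕ) (ht : 2 ≤ t) (ht' : t ≤ d - 1)
    (g : MvPolynomial (Fin 3) ℂ) (hg : g.IsHomogeneous t) :
    diffOp g f₂ = 0 ↔
      g ∈ Ideal.span ({X 0 * X 2, X 1 ^ 2, X 1 * X 2} : Set (MvPolynomial (Fin 3) ℂ)) :=
  stmt_1_general d f₂ hf₂ t ht' g hg
end

section
/- Let I be the ideal of ℂ[y₀,y₁,y₂] generated by y₀y₂, y₁², y₁y₂ and let d ≥ 4. A monomial y₀^i y₁^j y₂^k with i+j+k = d belongs to the ideal I² if and only if it is not one of the following nine monomials: y₀^d, y₀^{d−1}y₁, y₀^{d−2}y₁², y₀^{d−3}y₁³, y₀^{d−1}y₂, y₀y₂^{d−1}, y₂^d, y₁y₂^{d−1}, y₀^{d−2}y₁y₂. -/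
open MvPolynomial

noncomputable def fe (a b c : ℕ) : Fin 3 →₀ ℕ :=
  Finsupp.single 0 a + Finsupp.single 1 b + Finsupp.single 2 c

lemma fe_add (a b c x y z : ℕ) : fe a b c + fe x y z = fe (a+x) (b+y) (c+z) := by
  simp only [fe, Finsupp.single_add]; abel

lemma fe_le (a b c x y z : ℕ) : fe a b c ≤ fe x y z ↔ a ≤ x ∧ b ≤ y ∧ c ≤ z := by
  rw [Finsupp.le_def]
  constructor
  · intro h; exact ⟨by simpa [fe, Finsupp.single_apply] using h 0,
      by simpa [fe, Finsupp.single_apply] using h 1,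
      by simpa [fe, Finsupp.single_apply] using h 2⟩
  · rintro ⟨h0, h1, h2⟩ a; fin_cases a <;> simpa [fe, Finsupp.single_apply]

noncomputable def S6 : Set (Fin 3 →₀ ℕ) :=
  {fe 2 0 2, fe 1 2 1, fe 1 1 2, fe 0 4 0, fe 0 3 1, fe 0 2 2}

lemma sq_span : (Ideal.span ({X 0 * X 2, X 1 ^ 2, X 1 * X 2} :
      Set (MvPolynomial (Fin 3) ℂ))) ^ 2
    = Ideal.span ((fun s => monomial s (1:ℂ)) '' S6) := by
  have h1 : (X 0 * X 2 : MvPolynomial (Fin 3) ℂ) = monomial (fe 1 0 1) 1 := by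
    simp [X, monomial_mul, fe]
  have h2 : (X 1 ^ 2 : MvPolynomial (Fin 3) ℂ) = monomial (fe 0 2 0) 1 := by
    simp [X_pow_eq_monomial, fe]
  have h3 : (X 1 * X 2 : MvPolynomial (Fin 3) ℂ) = monomial (fe 0 1 1) 1 := by
    simp [X, monomial_mul, fe]
  rw [sq, Ideal.span_mul_span]
  apply le_antisymm <;> rw [Ideal.span_le]
  · intro p hp
    obtain ⟨a, ha, b, hb, rfl⟩ := hp
    apply Ideal.subset_span
    rcases ha with rfl | rfl | rfl <;> rcases hb with rfl | rfl | rfl <;>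
      simp only [h1, h2, h3, monomial_mul, fe_add, one_mul] <;>
      · refine ⟨_, ?_, rfl⟩
        norm_num [S6]
  · rintro p ⟨s, hs, rfl⟩
    apply Ideal.subset_span
    simp only [Set.mem_iUnion, Set.mem_insert_iff, Set.mem_singleton_iff]
    rcases hs with rfl | rfl | rfl | rfl | rfl | rfl
    · exact ⟨_, Or.inl rfl, _, Or.inl rfl, by simp [h1, monomial_mul, fe_add]⟩
    · exact ⟨_, Or.inl rfl, _, Or.inr (Or.inl rfl), by simp [h1, h2, monomial_mul, fe_add]⟩
    · exact ⟨_, Or.inl rfl, _, Or.inr (Or.inr rfl), by simp [h1, h3, monomial_mul, fe_add]⟩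
    · exact ⟨_, Or.inr (Or.inl rfl), _, Or.inr (Or.inl rfl), by simp [h2, monomial_mul, fe_add]⟩
    · exact ⟨_, Or.inr (Or.inl rfl), _, Or.inr (Or.inr rfl), by simp [h2, h3, monomial_mul, fe_add]⟩
    · exact ⟨_, Or.inr (Or.inr rfl), _, Or.inr (Or.inr rfl), by simp [h3, monomial_mul, fe_add]⟩

theorem stmt_5 (d : ℕ) (hd : 4 ≤ d)
    (I : Ideal (MvPolynomial (Fin 3) ℂ))
    (hI : I = Ideal.span ({X 0 * X 2, X 1 ^ 2, X 1 * X 2} : Set (MvPolynomial (Fin 3) ℂ)))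
    (i j k : ℕ) (hijk : i + j + k = d) :
    (X 0 ^ i * X 1 ^ j * X 2 ^ k ∈ I ^ 2) ↔
      ¬((i, j, k) = (d, 0, 0) ∨ (i, j, k) = (d - 1, 1, 0) ∨ (i, j, k) = (d - 2, 2, 0) ∨
        (i, j, k) = (d - 3, 3, 0) ∨ (i, j, k) = (d - 1, 0, 1) ∨ (i, j, k) = (1, 0, d - 1) ∨
        (i, j, k) = (0, 0, d) ∨ (i, j, k) = (0, 1, d - 1) ∨ (i, j, k) = (d - 2, 1, 1)) := by
  subst hI
  rw [sq_span]
  have hx : (X 0 ^ i * X 1 ^ j * X 2 ^ k : MvPolynomial (Fin 3) ℂ)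
      = monomial (fe i j k) 1 := by
    simp [X_pow_eq_monomial, monomial_mul, fe]
  rw [hx, mem_ideal_span_monomial_image]
  have hsupp : ((monomial (fe i j k)) (1:ℂ)).support = {fe i j k} := by
    rw [support_monomial, if_neg one_ne_zero]
  rw [hsupp]
  have key : (∀ xi ∈ ({fe i j k} : Finset (Fin 3 →₀ ℕ)), ∃ si ∈ S6, si ≤ xi) ↔
      ((2 ≤ i ∧ 2 ≤ k) ∨ (1 ≤ i ∧ 2 ≤ j ∧ 1 ≤ k) ∨ (1 ≤ i ∧ 1 ≤ j ∧ 2 ≤ k) ∨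
        (4 ≤ j) ∨ (3 ≤ j ∧ 1 ≤ k) ∨ (2 ≤ j ∧ 2 ≤ k)) := by
    simp only [Finset.mem_singleton, forall_eq]
    constructor
    · rintro ⟨s, hs, hle⟩
      simp only [S6, Set.mem_insert_iff, Set.mem_singleton_iff] at hs
      rcases hs with rfl | rfl | rfl | rfl | rfl | rfl <;> rw [fe_le] at hle <;> omega
    · rintro (h | h | h | h | h | h)
      · exact ⟨fe 2 0 2, by simp [S6], (fe_le ..).mpr (by omega)⟩
      · exact ⟨fe 1 2 1, by simp [S6], (fe_le ..).mpr (by omega)⟩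
      · exact ⟨fe 1 1 2, by simp [S6], (fe_le ..).mpr (by omega)⟩
      · exact ⟨fe 0 4 0, by simp [S6], (fe_le ..).mpr (by omega)⟩
      · exact ⟨fe 0 3 1, by simp [S6], (fe_le ..).mpr (by omega)⟩
      · exact ⟨fe 0 2 2, by simp [S6], (fe_le ..).mpr (by omega)⟩
  rw [key]
  simp only [Prod.mk.injEq]
  constructor
  · intro hL
    rintro (h | h | h | h | h | h | h | h | h) <;> omega
  · intro hR
    by_contra hL
    apply hR
    have h1 : ¬(2 ≤ i ∧ 2 ≤ k) := fun h => hL (Or.inl h)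
    have h2 : ¬(1 ≤ i ∧ 2 ≤ j ∧ 1 ≤ k) := fun h => hL (Or.inr (Or.inl h))
    have h3 : ¬(1 ≤ i ∧ 1 ≤ j ∧ 2 ≤ k) := fun h => hL (Or.inr (Or.inr (Or.inl h)))
    have h4 : ¬(4 ≤ j) := fun h => hL (Or.inr (Or.inr (Or.inr (Or.inl h))))
    have h5 : ¬(3 ≤ j ∧ 1 ≤ k) := fun h => hL (Or.inr (Or.inr (Or.inr (Or.inr (Or.inl h)))))
    have h6 : ¬(2 ≤ j ∧ 2 ≤ k) := fun h => hL (Or.inr (Or.inr (Or.inr (Or.inr (Or.inr h)))))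
    clear hL hR
    rcases Nat.eq_zero_or_pos k with hk | hk
    · have hj : j = 0 ∨ j = 1 ∨ j = 2 ∨ j = 3 := by omega
      rcases hj with rfl | rfl | rfl | rfl
      · exact Or.inl (by omega)
      · exact Or.inr (Or.inl (by omega))
      · exact Or.inr (Or.inr (Or.inl (by omega)))
      · exact Or.inr (Or.inr (Or.inr (Or.inl (by omega))))
    · rcases Nat.eq_zero_or_pos j with hj | hj
      · have hi : i = 0 ∨ i = 1 ∨ (2 ≤ i ∧ k = 1) := by omega
        rcases hi with rfl | rfl | hi
        · exact Or.inr (Or.inr (Or.inr (Or.inr (Or.inr (Or.inr (Or.inl (by omega)))))))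
        · exact Or.inr (Or.inr (Or.inr (Or.inr (Or.inr (Or.inl (by omega))))))
        · exact Or.inr (Or.inr (Or.inr (Or.inr (Or.inl (by omega)))))
      · rcases Nat.eq_zero_or_pos i with hi | hi
        · have : j = 1 := by omega
          exact Or.inr (Or.inr (Or.inr (Or.inr (Or.inr (Or.inr (Or.inr (Or.inl (by omega))))))))
        · exact Or.inr (Or.inr (Or.inr (Or.inr (Or.inr (Or.inr (Or.inr (Or.inr (by omega))))))))
end

section
/- Let n ≥ 2 and work in T = ℂ[y₀,y₁,…,yₙ]. Let F be either the cubic y₀²y₁ − y₀y₁² or the cubic y₀²y₁, let M be the ideal (y₂,…,yₙ) and let K be the ideal (F, y₂,…,yₙ). Then the ℂ-linear span of the set of products {g·h : g ∈ M₂, h ∈ K₃}, where M₂ is the degree-2 component of M and K₃ is the degree-3 component of K, has dimension C(n+5,5) − 3n − 3 (that is, C(n+5,5) − 6 − 3(n−1)) inside the space T₅ of quintic forms. -/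
/-!
Let `S = {y₂, …, yₙ}`, so that `M = (S)` and `K = (F) + M`. Since `F` is a cubic form,
`K₃ = ℂ F ⊕ M₃`, and the span in question is `M₂ M₃ + M₂ F`. Here `M₂ M₃` is spanned by the quintic
monomials of `S`-degree at least `2`, and modulo these `M₂ F` is spanned by the products
`yᵢ yⱼ F` with `i ≥ 2 > j`. These products are linearly independent (multiplication by `F ≠ 0` is
injective) and, as `F` only involves `y₀, y₁`, they have `S`-degree exactly `1`, so they are
independent of the monomials. Counting quintic monomials by their `S`-degree, there are
`C(n+5,5) - 6 - 5(n-1)` of `S`-degree at least `2`; adding the `2(n-1)` products gives the result.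
-/

open Finset Pointwise MvPolynomial

namespace Finsupp

variable {σ : Type*}

lemma sum_single_one_apply_of_mem {s : Finset σ} {i : σ} (hi : i ∈ s) :
    ∑ j ∈ s, single i 1 j = 1 := by
  classical
  simp [single_apply, hi]

lemma image_single_one_add_preimage_degree (s : Finset σ) (k : ℕ) :
    (single · 1) '' ↑s + degree ⁻¹' {k} =
      {d : σ →₀ ℕ | d.degree = k + 1 ∧ 0 < ∑ i ∈ s, d i} := by
  ext d
  constructor
  · rintro ⟨_, ⟨i, hi, rfl⟩, e, he, rfl⟩
    have := sum_single_one_apply_of_mem (mem_coe.mp hi)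
    simp_all only [Set.mem_preimage, Set.mem_singleton_iff, Set.mem_ofPred_eq, map_add,
      degree_single, coe_add, Pi.add_apply, sum_add_distrib]
    omega
  · rintro ⟨hd, hs⟩
    obtain ⟨i, hi, hdi⟩ := sum_pos_iff.mp hs
    have hle : single i 1 ≤ d := single_le_iff.mpr hdi
    refine ⟨single i 1, ⟨i, hi, rfl⟩, d - single i 1, ?_, add_tsub_cancel_of_le hle⟩
    have := congrArg degree (add_tsub_cancel_of_le hle)
    simp only [map_add, degree_single] at this
    simp only [Set.mem_preimage, Set.mem_singleton_iff]
    omega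

lemma image_single_one_add_image_single_one_add_preimage_degree (s : Finset σ) (k : ℕ) :
    (single · 1) '' ↑s + (single · 1) '' ↑s + degree ⁻¹' {k} =
      {d : σ →₀ ℕ | d.degree = k + 2 ∧ 2 ≤ ∑ i ∈ s, d i} := by
  rw [add_assoc, image_single_one_add_preimage_degree]
  ext d
  constructor
  · rintro ⟨_, ⟨i, hi, rfl⟩, e, ⟨he, hes⟩, rfl⟩
    have := sum_single_one_apply_of_mem (mem_coe.mp hi)
    simp only [Set.mem_ofPred_eq, map_add, degree_single, coe_add, Pi.add_apply,
      sum_add_distrib]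
    omega
  · rintro ⟨hd, hs⟩
    obtain ⟨_, ⟨i, hi, rfl⟩, e, he, rfl⟩ : d ∈ (single · 1) '' ↑s + degree ⁻¹' {k + 1} := by
      rw [image_single_one_add_preimage_degree]
      exact ⟨hd, by omega⟩
    have := sum_single_one_apply_of_mem (mem_coe.mp hi)
    simp only [coe_add, Pi.add_apply, sum_add_distrib] at hs
    exact Set.add_mem_add ⟨i, hi, rfl⟩ ⟨he, by omega⟩

variable [Fintype σ] [DecidableEq σ]

lemma coe_filter_univ_finsuppAntidiag (n : ℕ) (p : (σ →₀ ℕ) → Prop) [DecidablePred p] :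
    (↑{d ∈ (univ : Finset σ).finsuppAntidiag n | p d} : Set (σ →₀ ℕ)) =
      {d | d.degree = n ∧ p d} := by
  ext
  simp [degree_eq_sum]

lemma card_filter_univ_finsuppAntidiag_sum_eq (s : Finset σ) (a b : ℕ) :
    #{d ∈ univ.finsuppAntidiag (a + b) | ∑ i ∈ s, d i = b} =
      #(sᶜ.finsuppAntidiag a) * #(s.finsuppAntidiag b) := by
  rw [← card_product]
  symm
  refine card_nbij' (fun p => p.1 + p.2) (fun d => (d.filter (· ∉ s), d.filter (· ∈ s)))
    ?_ ?_ ?_ ?_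
  · rintro ⟨u, v⟩ h
    simp only [coe_product, Set.mem_prod, mem_coe, mem_finsuppAntidiag, ← coe_subset,
      support_subset_iff, mem_compl, not_not] at h
    obtain ⟨⟨rfl, hu⟩, ⟨rfl, hv⟩⟩ := h
    simp only [coe_filter, mem_finsuppAntidiag, coe_add, Pi.add_apply, sum_add_distrib,
      subset_univ, and_true, Set.mem_ofPred_eq, ← sum_add_sum_compl s]
    rw [sum_eq_zero hu, sum_eq_zero fun i hi => hv i (mem_compl.mp hi)]
    constructor <;> simp [add_comm]
  · intro d hd
    simp only [coe_filter, mem_finsuppAntidiag, subset_univ, and_true, Set.mem_ofPred_eq,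
      ← sum_add_sum_compl s] at hd
    simp only [coe_product, Set.mem_prod, mem_coe, mem_finsuppAntidiag, support_filter]
    refine ⟨⟨?_, fun i => by simp⟩, ?_, fun i => by simp⟩
    · rw [Finset.sum_congr rfl fun i hi => filter_apply_pos _ d (mem_compl.mp hi)]
      omega
    · exact (Finset.sum_congr rfl fun i hi => filter_apply_pos (· ∈ s) d hi).trans hd.2
  · rintro ⟨u, v⟩ h
    simp only [coe_product, Set.mem_prod, mem_coe, mem_finsuppAntidiag, ← coe_subset,
      support_subset_iff, mem_compl, not_not] at h
    ext i <;> by_cases hi : i ∈ s <;> simp [hi, h.1.2 i, h.2.2 i]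
  · intro d _
    exact (add_comm _ _).trans (filter_add_filter_not _ _)

lemma card_filter_univ_finsuppAntidiag_two_le_sum (s : Finset σ) (k : ℕ) :
    #{d ∈ (univ : Finset σ).finsuppAntidiag (k + 2) | 2 ≤ ∑ i ∈ s, d i} +
        #(sᶜ.finsuppAntidiag (k + 2)) + #(sᶜ.finsuppAntidiag (k + 1)) * #s =
      #((univ : Finset σ).finsuppAntidiag (k + 2)) := by
  have h0 := card_filter_univ_finsuppAntidiag_sum_eq s (k + 2) 0
  have h1 := card_filter_univ_finsuppAntidiag_sum_eq s (k + 1) 1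
  rw [add_zero, finsuppAntidiag_zero, card_singleton, mul_one] at h0
  rw [card_finsuppAntidiag_nat_eq_choose (s := s), add_tsub_cancel_right,
    Nat.choose_one_right] at h1
  have hsplit : {d ∈ (univ : Finset σ).finsuppAntidiag (k + 2) | ¬2 ≤ ∑ i ∈ s, d i} =
      {d ∈ (univ : Finset σ).finsuppAntidiag (k + 2) | ∑ i ∈ s, d i = 0} ∪
        {d ∈ (univ : Finset σ).finsuppAntidiag (k + 1 + 1) | ∑ i ∈ s, d i = 1} := by
    rw [← filter_or]
    exact filter_congr fun d _ => by omega
  rw [← card_filter_add_card_filter_not (s := (univ : Finset σ).finsuppAntidiag (k + 2))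
      (fun d => 2 ≤ ∑ i ∈ s, d i), hsplit,
    card_union_of_disjoint (disjoint_filter.mpr fun d _ h0 h1 => by omega), h0, h1]
  ring

end Finsupp

lemma Submodule.span_setOf_exists_mem_mul_eq {R A : Type*} [CommSemiring R] [Semiring A]
    [Algebra R A] (P Q : Submodule R A) :
    span R {x | ∃ p ∈ P, ∃ q ∈ Q, x = p * q} = P * Q := by
  rw [mul_eq_span_mul_set]
  congr 1
  ext
  simp [Set.mem_mul, eq_comm]

namespace MvPolynomial

variable {σ R : Type*} [CommRing R]

lemma X_mul_X_eq_monomial (i j : σ) :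
    (X i * X j : MvPolynomial σ R) = monomial (Finsupp.single i 1 + Finsupp.single j 1) 1 := by
  rw [monomial_single_add, pow_one]
  rfl

lemma homogeneousComponent_mul_of_isHomogeneous {F : MvPolynomial σ R} {k : ℕ}
    (hF : F.IsHomogeneous k) (p : MvPolynomial σ R) :
    homogeneousComponent k (p * F) = C (coeff 0 p) * F := by
  conv_lhs => rw [← sum_homogeneousComponent p]
  rw [Finset.sum_mul, map_sum, Finset.sum_eq_single 0]
  · have h0 : (homogeneousComponent 0 p * F).IsHomogeneous k := by
      simpa using (homogeneousComponent_isHomogeneous 0 p).mul hF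
    rw [homogeneousComponent_eq_self h0, homogeneousComponent_zero]
  · intro j _ hj
    rw [homogeneousComponent_of_mem ((homogeneousComponent_isHomogeneous j p).mul hF),
      if_neg (by omega)]
  · simp

lemma homogeneousComponent_mem_span_X_image {s : Set σ} {p : MvPolynomial σ R}
    (hp : p ∈ Ideal.span (X '' s)) (k : ℕ) :
    homogeneousComponent k p ∈ Ideal.span (X '' s) := by
  rw [mem_ideal_span_X_image] at hp ⊢
  intro d hd
  rw [support_homogeneousComponent, Finset.mem_filter] at hd
  exact hp d hd.1

lemma restrictScalars_span_singleton_sup_inf_homogeneousSubmodule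
    {I : Ideal (MvPolynomial σ R)} {k : ℕ} (hI : ∀ p ∈ I, homogeneousComponent k p ∈ I)
    {F : MvPolynomial σ R} (hF : F.IsHomogeneous k) :
    (Ideal.span {F} ⊔ I).restrictScalars R ⊓ homogeneousSubmodule σ R k =
      R ∙ F ⊔ (I.restrictScalars R ⊓ homogeneousSubmodule σ R k) := by
  apply le_antisymm
  · rintro h ⟨hFI, hh⟩
    obtain ⟨_, hq, w, hw, rfl⟩ := Submodule.mem_sup.mp hFI
    obtain ⟨p, rfl⟩ := Ideal.mem_span_singleton'.mp hq
    rw [← homogeneousComponent_eq_self hh, map_add, homogeneousComponent_mul_of_isHomogeneous hF,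
      ← smul_eq_C_mul]
    exact Submodule.add_mem_sup (Submodule.smul_mem _ _ (Submodule.mem_span_singleton_self F))
      ⟨hI w hw, homogeneousComponent_isHomogeneous k _⟩
  · refine sup_le ?_ (inf_le_inf_right _ (Submodule.restrictScalars_mono R le_sup_right))
    rw [Submodule.span_singleton_le_iff_mem]
    exact ⟨Ideal.mem_sup_left (Ideal.mem_span_singleton_self F), hF⟩

lemma restrictScalars_span_X_image_inf_homogeneousSubmodule (s : Finset σ) (k : ℕ) :
    (Ideal.span (X '' ↑s : Set (MvPolynomial σ R))).restrictScalars R ⊓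
        homogeneousSubmodule σ R (k + 1) =
      restrictSupport R ((Finsupp.single · 1) '' ↑s + Finsupp.degree ⁻¹' {k}) := by
  rw [Finsupp.image_single_one_add_preimage_degree, homogeneousSubmodule_eq_finsupp_supported]
  ext p
  simp only [Submodule.mem_inf, Submodule.restrictScalars_mem, mem_ideal_span_X_image,
    AddMonoidAlgebra.mem_supported, mem_restrictSupport_iff, Set.subset_def, Finset.mem_coe,
    Set.mem_ofPred_eq, sum_pos_iff, Nat.pos_iff_ne_zero]
  exact ⟨fun h x hx => ⟨h.2 x hx, h.1 x hx⟩,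
    fun h => ⟨fun x hx => (h x hx).2, fun x hx => (h x hx).1⟩⟩

lemma mem_restrictSupport_sum_eq_zero_of_mem_supported_compl [Fintype σ] [DecidableEq σ]
    {s : Finset σ} {F : MvPolynomial σ R} (hF : F ∈ supported R ↑sᶜ) :
    F ∈ restrictSupport R {d | ∑ i ∈ s, d i = 0} := by
  intro d hd
  refine sum_eq_zero fun i hi => by_contra fun hdi => ?_
  have : i ∈ F.vars := (mem_vars_iff_mem_support i).mpr ⟨d, hd, Finsupp.mem_support_iff.mpr hdi⟩
  exact mem_compl.mp (by exact_mod_cast (mem_supported.mp hF) this) hi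

lemma ne_zero_and_isHomogeneous_and_mem_supported_of_cubic [Nontrivial R] {a b : σ}
    (hab : a ≠ b) {S : Set σ} (ha : a ∈ S) (hb : b ∈ S) {F : MvPolynomial σ R}
    (hF : F = X a ^ 2 * X b - X a * X b ^ 2 ∨ F = X a ^ 2 * X b) :
    F ≠ 0 ∧ F.IsHomogeneous 3 ∧ F ∈ supported R S := by
  classical
  have hXa := (X_mem_supported (R := R)).mpr ha
  have hXb := (X_mem_supported (R := R)).mpr hb
  have hXa' := isHomogeneous_X R a
  have hXb' := isHomogeneous_X R b
  rcases hF with rfl | rfl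
  · refine ⟨fun h => ?_, ((hXa'.pow 2).mul hXb').sub (hXa'.mul (hXb'.pow 2)),
      sub_mem (mul_mem (pow_mem hXa 2) hXb) (mul_mem hXa (pow_mem hXb 2))⟩
    have hne : Finsupp.single a 1 + Finsupp.single b 2 ≠ Finsupp.single a 2 + Finsupp.single b 1 :=
      fun h => by simpa [hab] using congrArg (· a) h
    have := congrArg (coeff (Finsupp.single a 2 + Finsupp.single b 1)) h
    rw [coeff_sub, X_pow_eq_monomial, X_pow_eq_monomial, X, X, monomial_mul, monomial_mul,
      coeff_monomial, coeff_monomial] at this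
    simp [hne] at this
  · refine ⟨?_, (hXa'.pow 2).mul hXb', mul_mem (pow_mem hXa 2) hXb⟩
    rw [X_pow_eq_monomial, X, monomial_mul, one_mul, Ne, monomial_eq_zero]
    exact one_ne_zero

section MixedMultiples

variable [Fintype σ] [DecidableEq σ] (s : Finset σ) (F : MvPolynomial σ R)

noncomputable def mixedMultiples (ij : s × ↥sᶜ) : MvPolynomial σ R :=
  X (ij.1 : σ) * X (ij.2 : σ) * F

lemma restrictScalars_span_X_image_inf_homogeneousSubmodule_mul {k : ℕ}
    (hF : F.IsHomogeneous (k + 1)) :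
    ((Ideal.span (X '' ↑s : Set (MvPolynomial σ R))).restrictScalars R ⊓
        homogeneousSubmodule σ R 2) *
      (R ∙ F ⊔ ((Ideal.span (X '' ↑s)).restrictScalars R ⊓ homogeneousSubmodule σ R (k + 1))) =
    Submodule.span R (Set.range (mixedMultiples s F)) ⊔
      restrictSupport R {d | d.degree = k + 3 ∧ 2 ≤ ∑ i ∈ s, d i} := by
  set S₁ : Set (σ →₀ ℕ) := (Finsupp.single · 1) '' ↑s
  have hW : S₁ + Finsupp.degree ⁻¹' {1} + (S₁ + Finsupp.degree ⁻¹' {k}) =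
      {d | d.degree = k + 3 ∧ 2 ≤ ∑ i ∈ s, d i} := by
    rw [add_add_add_comm, ← Finsupp.degree_preimage_add, Set.singleton_add_singleton,
      add_comm 1 k, Finsupp.image_single_one_add_image_single_one_add_preimage_degree]
  have hF' : F ∈ restrictSupport R (Finsupp.degree ⁻¹' {k + 1}) := by
    have := (mem_homogeneousSubmodule _ _).mpr hF
    rwa [homogeneousSubmodule_eq_finsupp_supported] at this
  rw [restrictScalars_span_X_image_inf_homogeneousSubmodule s 1,
    restrictScalars_span_X_image_inf_homogeneousSubmodule s k, Submodule.mul_sup,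
    ← restrictSupport_add, hW]
  refine le_antisymm (sup_le ?_ le_sup_right) (sup_le ?_ le_sup_right)
  · rw [restrictSupport_eq_span, Submodule.span_mul_span, Submodule.span_le, Set.mul_singleton,
      Set.image_image, Set.image_subset_iff]
    rintro _ ⟨_, ⟨i, hi, rfl⟩, e, he, rfl⟩
    obtain ⟨j, rfl⟩ : e ∈ Set.range (Finsupp.single · 1) := by
      rw [Finsupp.range_single_one]
      exact he
    by_cases hj : j ∈ s
    · refine Submodule.mem_sup_right ?_
      rw [← Finsupp.image_single_one_add_image_single_one_add_preimage_degree,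
        restrictSupport_add]
      refine Submodule.mul_mem_mul ?_ hF'
      rw [monomial_mem_restrictSupport]
      exact Or.inl (Set.add_mem_add ⟨i, hi, rfl⟩ ⟨j, hj, rfl⟩)
    · refine Submodule.mem_sup_left
        (Submodule.subset_span ⟨(⟨i, hi⟩, ⟨j, mem_compl.mpr hj⟩), ?_⟩)
      simp [mixedMultiples, X_mul_X_eq_monomial]
  · rw [Submodule.span_le, Set.range_subset_iff]
    rintro ⟨⟨i, hi⟩, ⟨j, -⟩⟩
    refine Submodule.mem_sup_left
      (Submodule.mul_mem_mul ?_ (Submodule.mem_span_singleton_self F))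
    rw [X_mul_X_eq_monomial, monomial_mem_restrictSupport]
    exact Or.inl (Set.add_mem_add ⟨i, hi, rfl⟩ (by simp))

variable {F}

lemma linearIndependent_mixedMultiples [IsDomain R] (hF0 : F ≠ 0) :
    LinearIndependent R (mixedMultiples s F) := by
  let e (ij : s × ↥sᶜ) : σ →₀ ℕ := Finsupp.single (ij.1 : σ) 1 + Finsupp.single (ij.2 : σ) 1
  have he : Function.Injective e := by
    rintro ⟨⟨i, hi⟩, ⟨j, hj⟩⟩ ⟨⟨i', hi'⟩, ⟨j', hj'⟩⟩ h
    rcases (Finsupp.single_add_single_eq_single_add_single one_ne_zero one_ne_zero).mp h with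
      ⟨rfl, rfl⟩ | ⟨-, hij', -⟩ | ⟨h2, -⟩
    · rfl
    · simp only at hij'
      exact absurd (hij' ▸ hi) (mem_compl.mp hj')
    · exact absurd h2 two_ne_zero
  have hG : mixedMultiples s F = LinearMap.mulRight R F ∘ basisMonomials σ R ∘ e := by
    ext1 ij
    simp [mixedMultiples, e, X_mul_X_eq_monomial, coe_basisMonomials]
  rw [hG]
  exact ((basisMonomials σ R).linearIndependent.comp _ he).map'
    (LinearMap.mulRight R F) (LinearMap.ker_eq_bot.mpr (mul_left_injective₀ hF0))

lemma disjoint_span_mixedMultiples (hF : F ∈ supported R ↑sᶜ) :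
    Disjoint (Submodule.span R (Set.range (mixedMultiples s F)))
      (restrictSupport R {d | 2 ≤ ∑ i ∈ s, d i}) := by
  have hG : Submodule.span R (Set.range (mixedMultiples s F)) ≤
      restrictSupport R {d | ∑ i ∈ s, d i = 1} := by
    rw [Submodule.span_le, Set.range_subset_iff]
    rintro ⟨⟨i, hi⟩, ⟨j, hj⟩⟩
    have hX : X i * X j ∈ restrictSupport R {d | ∑ i ∈ s, d i = 1} := by
      rw [X_mul_X_eq_monomial, monomial_mem_restrictSupport]
      left
      simp [sum_add_distrib, hi, Finsupp.single_apply, mem_compl.mp hj]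
    refine restrictSupport_mono R ?_ ((restrictSupport_add R _ _).ge
      (Submodule.mul_mem_mul hX (mem_restrictSupport_sum_eq_zero_of_mem_supported_compl hF)))
    rintro _ ⟨a, ha, b, hb, rfl⟩
    simp_all [sum_add_distrib]
  refine Disjoint.mono_left hG (Submodule.disjoint_def.mpr fun p h1 h2 => ?_)
  rw [← support_eq_empty, Finset.eq_empty_iff_forall_notMem]
  intro d hd
  have h1d : ∑ i ∈ s, d i = 1 := h1 hd
  have h2d : 2 ≤ ∑ i ∈ s, d i := h2 hd
  omega

end MixedMultiples

theorem finrank_span_mul_mem_inf_homogeneousSubmodule {K : Type*} [Field K] [Fintype σ]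
    [DecidableEq σ] (s : Finset σ) {F : MvPolynomial σ K} {k : ℕ} (hF0 : F ≠ 0)
    (hF : F.IsHomogeneous (k + 1)) (hFs : F ∈ supported K ↑sᶜ) :
    Module.finrank K (Submodule.span K {p |
      ∃ g ∈ (Ideal.span (X '' ↑s)).restrictScalars K ⊓ homogeneousSubmodule σ K 2,
      ∃ h ∈ (Ideal.span ({F} ∪ X '' ↑s)).restrictScalars K ⊓ homogeneousSubmodule σ K (k + 1),
        p = g * h}) =
      #{d ∈ univ.finsuppAntidiag (k + 3) | 2 ≤ ∑ i ∈ s, d i} + #s * #sᶜ := by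
  set W : Finset (σ →₀ ℕ) := {d ∈ univ.finsuppAntidiag (k + 3) | 2 ≤ ∑ i ∈ s, d i}
  have hW : restrictSupport K ↑W =
      Submodule.span K (Set.range fun d : W => monomial (d : σ →₀ ℕ) (1 : K)) := by
    rw [restrictSupport_eq_span, Set.image_eq_range]
    rfl
  have hli : LinearIndependent K
      (Sum.elim (mixedMultiples s F) fun d : W => monomial (d : σ →₀ ℕ) (1 : K)) := by
    refine (linearIndependent_mixedMultiples s hF0).sum_type
      ((basisMonomials σ K).linearIndependent.comp _ Subtype.val_injective) ?_
    rw [← hW]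
    refine (disjoint_span_mixedMultiples s hFs).mono_right (restrictSupport_mono K ?_)
    intro d hd
    simp_all [W]
  rw [Submodule.span_setOf_exists_mem_mul_eq, Ideal.span_union,
    restrictScalars_span_singleton_sup_inf_homogeneousSubmodule
      (fun p hp => homogeneousComponent_mem_span_X_image hp _) hF,
    restrictScalars_span_X_image_inf_homogeneousSubmodule_mul s F hF,
    ← Finsupp.coe_filter_univ_finsuppAntidiag, hW, ← Submodule.span_union,
    ← Set.Sum.elim_range, finrank_span_eq_card hli]
  simp only [Fintype.card_sum, Fintype.card_prod, Fintype.card_coe, add_comm]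

end MvPolynomial

theorem stmt_8 (n : ℕ) (hn : 2 ≤ n)
    (F : MvPolynomial (Fin (n + 1)) ℂ)
    (hF : F = X 0 ^ 2 * X 1 - X 0 * X 1 ^ 2 ∨ F = X 0 ^ 2 * X 1)
    (M K : Ideal (MvPolynomial (Fin (n + 1)) ℂ))
    (hM : M = Ideal.span {p : MvPolynomial (Fin (n + 1)) ℂ | ∃ i : Fin (n + 1), 2 ≤ (i : ℕ) ∧ p = X i})
    (hK : K = Ideal.span
      ({F} ∪ {p : MvPolynomial (Fin (n + 1)) ℂ | ∃ i : Fin (n + 1), 2 ≤ (i : ℕ) ∧ p = X i})) :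
    Module.finrank ℂ
        ↥(Submodule.span ℂ
          {p : MvPolynomial (Fin (n + 1)) ℂ |
            ∃ g ∈ Submodule.restrictScalars ℂ M ⊓ homogeneousSubmodule (Fin (n + 1)) ℂ 2,
            ∃ h ∈ Submodule.restrictScalars ℂ K ⊓ homogeneousSubmodule (Fin (n + 1)) ℂ 3,
            p = g * h}) = Nat.choose (n + 5) 5 - 3 * n - 3 := by
  obtain ⟨m, rfl⟩ : ∃ m, n = m + 1 := ⟨n - 1, by omega⟩
  set s : Finset (Fin (m + 2)) := {i | 2 ≤ (i : ℕ)}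
  have hX : {p : MvPolynomial (Fin (m + 2)) ℂ | ∃ i : Fin (m + 2), 2 ≤ (i : ℕ) ∧ p = X i} =
      X '' ↑s := by
    ext
    simp [s, eq_comm]
  have hsc : #sᶜ = 2 := by
    rw [compl_filter, filter_congr fun i _ => not_le, Fin.card_filter_val_lt]
    omega
  have hs : #s = m := by
    have := card_compl s
    rw [hsc, Fintype.card_fin] at this
    omega
  obtain ⟨hF0, hF3, hFs⟩ := ne_zero_and_isHomogeneous_and_mem_supported_of_cubic
    (S := ↑sᶜ) Fin.zero_ne_one (by simp [s]) (by simp [s]) hF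
  subst hM hK
  rw [hX, finrank_span_mul_mem_inf_homogeneousSubmodule s hF0 hF3 hFs]
  have hcount := Finsupp.card_filter_univ_finsuppAntidiag_two_le_sum s 3
  simp only [card_finsuppAntidiag_nat_eq_choose, hsc, hs, card_univ, Fintype.card_fin] at hcount
  norm_num at hcount
  rw [show 2 + 3 = 5 from rfl, hs, hsc, show m + 1 + 5 = m + 6 by ring]
  omega
end

section
/- Let f ∈ ℂ[x₀,…,xₙ] be a homogeneous polynomial of degree d ≥ 1, and suppose that the ℂ-vector space of linear forms ℓ = a₀y₀ + ⋯ + aₙyₙ such that the corresponding derivation ℓ(∂)f = a₀∂f/∂x₀ + ⋯ + aₙ∂f/∂xₙ vanishes has dimension at least n − 2. Then there exist three linear forms l₁, l₂, l₃ ∈ ℂ[x₀,…,xₙ] and a homogeneous polynomial g ∈ ℂ[z₀,z₁,z₂] of degree d such that f = g(l₁,l₂,l₃). -/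
/-!
Pick a basis of `ℂⁿ⁺¹` whose last vectors span the space `K` of directions in which `f` has
zero derivative, and at most three further vectors. In the coordinates of that basis `f` has
vanishing partial derivatives in the directions of `K`, so in characteristic zero it only
involves the remaining (at most three) coordinates, which are linear forms in the original ones.
-/

open MvPolynomial

/-- The linear map sending the coefficient vector `a` of a linear form
`ℓ = a₀y₀ + ⋯ + aₙyₙ` to the directional derivative `ℓ(∂)f = ∑ aᵢ ∂f/∂xᵢ`. -/
noncomputable def dirDeriv {n : ℕ} (f : MvPolynomial (Fin n) ℂ) :
    (Fin n → ℂ) →ₗ[ℂ] MvPolynomial (Fin n) ℂ where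
  toFun a := ∑ i, a i • MvPolynomial.pderiv i f
  map_add' a b := by simp [add_smul, Finset.sum_add_distrib]
  map_smul' c a := by simp [Finset.smul_sum, mul_smul]

open Module

namespace MvPolynomial

variable {R σ τ : Type*} [CommSemiring R]

theorem pderiv_aeval [Fintype σ] (l : σ → MvPolynomial τ R) (j : τ) (p : MvPolynomial σ R) :
    pderiv j (aeval l p) = ∑ i, pderiv j (l i) * aeval l (pderiv i p) := by
  classical
  induction p using MvPolynomial.induction_on with
  | C a => simp
  | add p q hp hq => simp only [map_add, hp, hq, mul_add, Finset.sum_add_distrib]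
  | mul_X p i hp =>
    simp only [map_mul, aeval_X, pderiv_mul, hp, pderiv_X, map_add, mul_add,
      Finset.sum_add_distrib, Finset.sum_mul, mul_assoc]
    simp [Pi.single_apply, mul_comm]

theorem notMem_vars_of_pderiv_eq_zero [NoZeroDivisors R] [CharZero R] {i : σ}
    {p : MvPolynomial σ R} (h : pderiv i p = 0) : i ∉ p.vars := by
  classical
  rw [mem_vars_iff_mem_support]
  rintro ⟨m, hm, hmi⟩
  have hle : Finsupp.single i 1 ≤ m := by
    simpa using Nat.one_le_iff_ne_zero.2 (Finsupp.mem_support_iff.1 hmi)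
  have hcoeff := coeff_pderiv (i := i) p (m - Finsupp.single i 1)
  rw [h, coeff_zero, tsub_add_cancel_of_le hle, eq_comm,
    mul_eq_zero_iff_right (Nat.cast_add_one_ne_zero _)] at hcoeff
  exact mem_support_iff.1 hm hcoeff

variable (α : Type*)

def FactorsThroughLinearForms (d : ℕ) (f : MvPolynomial σ R) : Prop :=
  ∃ l : α → MvPolynomial σ R, (∀ i, (l i).IsHomogeneous 1) ∧
    ∃ g : MvPolynomial α R, g.IsHomogeneous d ∧ f = aeval l g

variable {α} {β : Type*}

theorem FactorsThroughLinearForms.of_card_le [Fintype α] [Fintype β] {d : ℕ}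
    {f : MvPolynomial σ R} (hf : FactorsThroughLinearForms α d f)
    (hcard : Fintype.card α ≤ Fintype.card β) : FactorsThroughLinearForms β d f := by
  classical
  obtain ⟨l, hl, g, hg, rfl⟩ := hf
  obtain ⟨e⟩ := Function.Embedding.nonempty_of_card_le hcard
  refine ⟨Function.extend e l 0, fun j => ?_, rename e g, hg.rename_isHomogeneous, ?_⟩
  · rw [Function.extend_def]
    split_ifs
    exacts [hl _, isHomogeneous_zero _ _ _]
  · rw [aeval_rename, Function.extend_comp e.injective]

end MvPolynomial

namespace Matrix

variable {R m n : Type*} [CommSemiring R] [Fintype n]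

@[simp]
theorem pderiv_toMvPolynomial (M : Matrix m n R) (i : m) (j : n) :
    pderiv j (M.toMvPolynomial i) = C (M i j) := by
  classical
  simp [toMvPolynomial, ← C_mul_X_eq_monomial, pderiv_X, Pi.single_apply]

theorem pderiv_aeval_toMvPolynomial [Fintype m] (M : Matrix m n R) (j : n)
    (p : MvPolynomial m R) :
    pderiv j (aeval M.toMvPolynomial p) = aeval M.toMvPolynomial (∑ i, M i j • pderiv i p) := by
  rw [pderiv_aeval]
  simp [map_sum, smul_eq_C_mul]

theorem aeval_toMvPolynomial_aeval_toMvPolynomial {o : Type*} [Fintype o] (M : Matrix m n R)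
    (N : Matrix n o R) (p : MvPolynomial m R) :
    aeval N.toMvPolynomial (aeval M.toMvPolynomial p) = aeval (M * N).toMvPolynomial p := by
  simp only [aeval_eq_bind₁, bind₁_bind₁, ← toMvPolynomial_mul]

end Matrix

theorem Submodule.exists_basis_sum_inr_mem {k V : Type*} [Field k] [AddCommGroup V] [Module k V]
    [FiniteDimensional k V] (K : Submodule k V) :
    ∃ a, a + finrank k K = finrank k V ∧
      ∃ b : Basis (Fin a ⊕ Fin (finrank k K)) k V, ∀ j, b (.inr j) ∈ K := by
  obtain ⟨W, hW⟩ := K.exists_isCompl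
  refine ⟨finrank k W, finrank_add_eq_of_isCompl hW.symm,
    ((finBasis k W).prod (finBasis k K)).map (prodEquivOfIsCompl W K hW.symm), fun j => ?_⟩
  simp

namespace MvPolynomial

variable {k σ α β : Type*} [Field k] [CharZero k] [Fintype σ] [Fintype α] [Fintype β]

theorem factorsThroughLinearForms_of_basis {d : ℕ} {f : MvPolynomial σ k}
    (hf : f.IsHomogeneous d) (b : Basis (α ⊕ β) k (σ → k))
    (hb : ∀ j, ∑ i, b (.inr j) i • pderiv i f = 0) : FactorsThroughLinearForms α d f := by
  classical
  set P := (Pi.basisFun k σ).toMatrix b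
  set Q := b.toMatrix (Pi.basisFun k σ)
  set F := aeval P.toMvPolynomial f
  have hfF : f = aeval Q.toMvPolynomial F := by
    rw [Matrix.aeval_toMvPolynomial_aeval_toMvPolynomial,
      Basis.toMatrix_mul_toMatrix_flip, Matrix.toMvPolynomial_one, aeval_X_left_apply]
  have hvars : (F.vars : Set (α ⊕ β)) ⊆ Set.range Sum.inl := by
    rintro (a | j) hj
    · exact ⟨a, rfl⟩
    · refine absurd hj (notMem_vars_of_pderiv_eq_zero ?_)
      simpa [F, P, Basis.toMatrix_apply, hb] using Matrix.pderiv_aeval_toMvPolynomial P (.inr j) f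
  obtain ⟨g, hg⟩ := exists_rename_eq_of_vars_subset_range F Sum.inl Sum.inl_injective hvars
  refine ⟨fun a => Q.toMvPolynomial (.inl a), fun a => Q.toMvPolynomial_isHomogeneous _, g, ?_, ?_⟩
  · rw [← IsHomogeneous.rename_isHomogeneous_iff Sum.inl_injective, hg]
    simpa [F] using hf.aeval _ P.toMvPolynomial_isHomogeneous
  · rw [hfF, ← hg, aeval_rename]
    rfl

theorem factorsThroughLinearForms_of_card_le_finrank_add {d : ℕ} {f : MvPolynomial σ k}
    (hf : f.IsHomogeneous d) (K : Submodule k (σ → k))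
    (hK : ∀ a ∈ K, ∑ i, a i • pderiv i f = 0)
    (hcard : Fintype.card σ ≤ finrank k K + Fintype.card α) :
    FactorsThroughLinearForms α d f := by
  obtain ⟨r, hr, b, hbK⟩ := K.exists_basis_sum_inr_mem
  refine (factorsThroughLinearForms_of_basis hf b fun j => hK _ (hbK j)).of_card_le ?_
  rw [finrank_fintype_fun_eq_card] at hr
  simp only [Fintype.card_fin]
  omega

end MvPolynomial

theorem stmt_10_general (n d : ℕ)
    (f : MvPolynomial (Fin (n + 1)) ℂ) (hf : f.IsHomogeneous d)
    (hker : n - 2 ≤ Module.finrank ℂ ↥(LinearMap.ker (dirDeriv f))) :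
    ∃ l : Fin 3 → MvPolynomial (Fin (n + 1)) ℂ,
      (∀ i, (l i).IsHomogeneous 1) ∧
      ∃ g : MvPolynomial (Fin 3) ℂ, g.IsHomogeneous d ∧ f = aeval l g :=
  factorsThroughLinearForms_of_card_le_finrank_add hf (LinearMap.ker (dirDeriv f))
    (fun _ ha => LinearMap.mem_ker.mp ha)
    (by simp only [Fintype.card_fin]; omega)

theorem stmt_10 (n d : ℕ) (hd : 1 ≤ d)
    (f : MvPolynomial (Fin (n + 1)) ℂ) (hf : f.IsHomogeneous d)
    (hker : n - 2 ≤ Module.finrank ℂ ↥(LinearMap.ker (dirDeriv f))) :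
    ∃ l : Fin 3 → MvPolynomial (Fin (n + 1)) ℂ,
      (∀ i, (l i).IsHomogeneous 1) ∧
      ∃ g : MvPolynomial (Fin 3) ℂ, g.IsHomogeneous d ∧ f = aeval l g :=
  stmt_10_general n d f hf hker
end

section
/- Let f ∈ ℂ[x₀,…,xₙ] be a nonzero homogeneous polynomial of degree d ≥ 1 and let r be the minimal integer such that f can be written as a homogeneous polynomial in r linear forms. If f = g(l₁,…,l_r) and f = g'(l'₁,…,l'_r) where l₁,…,l_r are linearly independent linear forms and l'₁,…,l'_r are linearly independent linear forms, then the ℂ-linear span of {l₁,…,l_r} equals the ℂ-linear span of {l'₁,…,l'_r}. In other words, the r-dimensional space of linear forms realizing the minimal expression of f is unique. -/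
/-!
Let `W`, `W'` be the spans of the two families of linear forms, so that `f` lies in both
subalgebras `K[W]` and `K[W']`. Take the projection `π` onto `W'` along a complement that contains
a complement of `W ⊓ W'` in `W`. The substitution `Xᵢ ↦ π Xᵢ` agrees with `π` on linear forms, so it
fixes `K[W']` pointwise and maps `K[W]` into `K[W ⊓ W']`; hence `f ∈ K[W ⊓ W']`, and taking the
degree-`d` component shows that `f` is a form in `dim (W ⊓ W')` linear forms. Minimality of `r`
gives `r ≤ dim (W ⊓ W')`, while `dim W = dim W' = r`, so `W = W ⊓ W' = W'`.
-/

open MvPolynomial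

namespace Submodule

variable {K M : Type*} [DivisionRing K] [AddCommGroup M] [Module K M]

theorem exists_linearMap_eqOn_map_le_inf (W W' : Submodule K M) :
    ∃ π : M →ₗ[K] M, (∀ x ∈ W', π x = x) ∧ W.map π ≤ W ⊓ W' := by
  obtain ⟨C, hUC, hUCW⟩ := IsModularLattice.exists_disjoint_and_sup_eq (inf_le_left : W ⊓ W' ≤ W)
  have hW'C : Disjoint W' C := by
    rw [disjoint_iff, ← inf_eq_right.2 (hUCW ▸ le_sup_right : C ≤ W), ← inf_assoc,
      inf_comm W', hUC.eq_bot]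
  obtain ⟨D, hD⟩ := exists_isCompl (W' ⊔ C)
  have hW'K : IsCompl W' (C ⊔ D) := hW'C.isCompl_sup_right_of_isCompl_sup_left hD
  refine ⟨W'.projection _ hW'K, fun x hx => projection_apply_of_mem_left hW'K hx, ?_⟩
  conv_lhs => rw [← hUCW]
  rw [Submodule.map_sup, sup_le_iff]
  constructor
  · rintro _ ⟨x, hx, rfl⟩
    rwa [projection_apply_of_mem_left hW'K hx.2]
  · rintro _ ⟨x, hx, rfl⟩
    rw [projection_apply_of_mem_right hW'K (mem_sup_left hx)]
    exact zero_mem _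

end Submodule

namespace MvPolynomial

variable {σ τ R : Type*} [CommSemiring R]

theorem homogeneousComponent_aeval_of_isHomogeneous_one {b : σ → MvPolynomial τ R}
    (hb : ∀ i, (b i).IsHomogeneous 1) (d : ℕ) (p : MvPolynomial σ R) :
    homogeneousComponent d (aeval b p) = aeval b (homogeneousComponent d p) := by
  have hcomp (i : ℕ) : (aeval b (homogeneousComponent i p)).IsHomogeneous i := by
    simpa using (homogeneousComponent_isHomogeneous i p).aeval b hb
  conv_lhs => rw [← sum_homogeneousComponent p]
  rw [map_sum, map_sum, Finset.sum_congr rfl fun i _ => homogeneousComponent_of_mem (hcomp i),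
    Finset.sum_ite_eq]
  split_ifs with hd
  · rfl
  · rw [homogeneousComponent_eq_zero _ _ (by simpa using hd), map_zero]

theorem exists_isHomogeneous_eq_aeval_of_mem_adjoin {b : σ → MvPolynomial τ R}
    (hb : ∀ i, (b i).IsHomogeneous 1) {d : ℕ} {f : MvPolynomial τ R} (hf : f.IsHomogeneous d)
    (hfb : f ∈ Algebra.adjoin R (Set.range b)) :
    ∃ g : MvPolynomial σ R, g.IsHomogeneous d ∧ f = aeval b g := by
  rw [Algebra.adjoin_range_eq_range_aeval] at hfb
  obtain ⟨g, rfl⟩ := (AlgHom.mem_range _).1 hfb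
  refine ⟨homogeneousComponent d g, homogeneousComponent_isHomogeneous d g, ?_⟩
  rw [← homogeneousComponent_aeval_of_isHomogeneous_one hb, homogeneousComponent_of_mem hf,
    if_pos rfl]

variable {K : Type*} [Field K]

theorem adjoin_inf_adjoin_le_adjoin_inf {W W' : Submodule K (MvPolynomial σ K)}
    (hW : W ≤ homogeneousSubmodule σ K 1) (hW' : W' ≤ homogeneousSubmodule σ K 1) :
    Algebra.adjoin K (W : Set (MvPolynomial σ K)) ⊓ Algebra.adjoin K W' ≤
      Algebra.adjoin K ((W ⊓ W' : Submodule K (MvPolynomial σ K)) : Set (MvPolynomial σ K)) := by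
  obtain ⟨π, hπW', hπW⟩ := W.exists_linearMap_eqOn_map_le_inf W'
  set Φ := aeval (R := K) fun i => π (X i)
  have hΦ : ∀ x ∈ homogeneousSubmodule σ K 1, Φ x = π x := by
    rw [homogeneousSubmodule_one_eq_span_X]
    exact LinearMap.eqOn_span (f := Φ.toLinearMap) fun _ ⟨i, hi⟩ => by subst hi; simp [Φ]
  rintro f ⟨hfW, hfW'⟩
  have hΦf : Φ f = f :=
    AlgHom.adjoin_le_equalizer Φ (AlgHom.id K _)
      (fun x hx => (hΦ x (hW' hx)).trans (hπW' x hx)) hfW'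
  have hΦW : Φ '' W ⊆ (W ⊓ W' : Submodule K (MvPolynomial σ K)) := by
    rintro _ ⟨x, hx, rfl⟩
    rw [hΦ x (hW hx)]
    exact hπW ⟨x, hx, rfl⟩
  rw [← hΦf]
  refine Algebra.adjoin_mono hΦW ?_
  rw [← AlgHom.map_adjoin]
  exact ⟨f, hfW, rfl⟩

theorem exists_fin_finrank_isHomogeneous_eq_aeval {U : Submodule K (MvPolynomial σ K)}
    [FiniteDimensional K U] (hU : U ≤ homogeneousSubmodule σ K 1) {d : ℕ}
    {f : MvPolynomial σ K} (hf : f.IsHomogeneous d) (hfU : f ∈ Algebra.adjoin K (U : Set _)) :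
    ∃ l : Fin (Module.finrank K U) → MvPolynomial σ K, (∀ i, (l i).IsHomogeneous 1) ∧
      ∃ g : MvPolynomial (Fin (Module.finrank K U)) K, g.IsHomogeneous d ∧ f = aeval l g := by
  set b := Module.finBasis K U
  have hb : Submodule.span K (Set.range fun i => (b i : MvPolynomial σ K)) = U := by
    have := congrArg (Submodule.map U.subtype) b.span_eq
    rwa [Submodule.map_span, Submodule.map_subtype_top, ← Set.range_comp] at this
  refine ⟨fun i => b i, fun i => hU (b i).2,
    exists_isHomogeneous_eq_aeval_of_mem_adjoin (fun i => hU (b i).2) hf ?_⟩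
  rwa [← Algebra.adjoin_span, hb]

end MvPolynomial

theorem stmt_12_general (n d r : ℕ)
    (f : MvPolynomial (Fin (n + 1)) ℂ) (hfhom : f.IsHomogeneous d)
    (hr : IsLeast
      {s : ℕ | ∃ l : Fin s → MvPolynomial (Fin (n + 1)) ℂ,
        (∀ i, (l i).IsHomogeneous 1) ∧
        ∃ g : MvPolynomial (Fin s) ℂ, g.IsHomogeneous d ∧ f = aeval l g} r)
    (l l' : Fin r → MvPolynomial (Fin (n + 1)) ℂ)
    (hl : ∀ i, (l i).IsHomogeneous 1) (hl' : ∀ i, (l' i).IsHomogeneous 1)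
    (hli : LinearIndependent ℂ l) (hli' : LinearIndependent ℂ l')
    (g g' : MvPolynomial (Fin r) ℂ)
    (hfg : f = aeval l g) (hfg' : f = aeval l' g') :
    Submodule.span ℂ (Set.range l) = Submodule.span ℂ (Set.range l') := by
  set W := Submodule.span ℂ (Set.range l)
  set W' := Submodule.span ℂ (Set.range l')
  have : FiniteDimensional ℂ W := .span_of_finite ℂ (Set.finite_range l)
  have : FiniteDimensional ℂ W' := .span_of_finite ℂ (Set.finite_range l')
  have hW : W ≤ homogeneousSubmodule _ ℂ 1 := Submodule.span_le.2 (Set.range_subset_iff.2 hl)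
  have hW' : W' ≤ homogeneousSubmodule _ ℂ 1 := Submodule.span_le.2 (Set.range_subset_iff.2 hl')
  have hfW : f ∈ Algebra.adjoin ℂ (W : Set _) := by
    rw [Algebra.adjoin_span, Algebra.adjoin_range_eq_range_aeval]
    exact ⟨g, hfg.symm⟩
  have hfW' : f ∈ Algebra.adjoin ℂ (W' : Set _) := by
    rw [Algebra.adjoin_span, Algebra.adjoin_range_eq_range_aeval]
    exact ⟨g', hfg'.symm⟩
  have hrU : r ≤ Module.finrank ℂ (W ⊓ W' : Submodule ℂ _) :=
    hr.2 (exists_fin_finrank_isHomogeneous_eq_aeval (inf_le_left.trans hW) hfhom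
      (adjoin_inf_adjoin_le_adjoin_inf hW hW' ⟨hfW, hfW'⟩))
  have hUW : W ⊓ W' = W := Submodule.eq_of_le_of_finrank_le inf_le_left
    (by rwa [finrank_span_eq_card hli, Fintype.card_fin])
  have hUW' : W ⊓ W' = W' := Submodule.eq_of_le_of_finrank_le inf_le_right
    (by rwa [finrank_span_eq_card hli', Fintype.card_fin])
  rw [← hUW, hUW']

theorem stmt_12 (n d r : ℕ) (hd : 1 ≤ d)
    (f : MvPolynomial (Fin (n + 1)) ℂ) (hf : f ≠ 0) (hfhom : f.IsHomogeneous d)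
    (hr : IsLeast
      {s : ℕ | ∃ l : Fin s → MvPolynomial (Fin (n + 1)) ℂ,
        (∀ i, (l i).IsHomogeneous 1) ∧
        ∃ g : MvPolynomial (Fin s) ℂ, g.IsHomogeneous d ∧ f = aeval l g} r)
    (l l' : Fin r → MvPolynomial (Fin (n + 1)) ℂ)
    (hl : ∀ i, (l i).IsHomogeneous 1) (hl' : ∀ i, (l' i).IsHomogeneous 1)
    (hli : LinearIndependent ℂ l) (hli' : LinearIndependent ℂ l')
    (g g' : MvPolynomial (Fin r) ℂ) (hg : g.IsHomogeneous d) (hg' : g'.IsHomogeneous d)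
    (hfg : f = aeval l g) (hfg' : f = aeval l' g') :
    Submodule.span ℂ (Set.range l) = Submodule.span ℂ (Set.range l') :=
  stmt_12_general n d r f hfhom hr l l' hl hl' hli hli' g g' hfg hfg'
end

section
/- Let d ≥ 5 and let α, β ∈ ℂ be nonzero, and set f = x₀^d + α·x₁^d + β·(x₀+x₁)^d ∈ ℂ[x₀,x₁]. Then the space of homogeneous cubics g ∈ ℂ[y₀,y₁] with g(∂₀,∂₁)f = 0 is exactly the one-dimensional span of the cubic y₀²y₁ − y₀y₁². -/
open MvPolynomial

/-! Apolarity: for a form `g` of degree `k` and the linear form `ℓ_a = ∑ aᵢ xᵢ`, the chain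
rule gives `g(∂) ℓ_a^d = d(d-1)⋯(d-k+1) · g(a) · ℓ_a^(d-k)`. Hence for a cubic `g`,
`g(∂) f = d(d-1)(d-2) (g(1,0) x₀^(d-3) + α g(0,1) x₁^(d-3) + β g(1,1) (x₀+x₁)^(d-3))`.
For `d - 3 ≥ 2` these three powers are linearly independent, so `g` annihilates `f` iff it
vanishes at `(1,0)`, `(0,1)` and `(1,1)`, i.e. iff it is a multiple of `y₀y₁(y₀ - y₁)`. -/

namespace Apolarity

variable {n : ℕ}

noncomputable def linearForm (a : Fin n → ℂ) : MvPolynomial (Fin n) ℂ := ∑ i, C (a i) * X i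

theorem pderiv_linearForm (a : Fin n → ℂ) (i : Fin n) : pderiv i (linearForm a) = C (a i) := by
  simp [linearForm, pderiv_X, Pi.single_apply]

theorem pderiv_aeval_linearForm (a : Fin n → ℂ) (i : Fin n) (p : Polynomial ℂ) :
    pderiv i (Polynomial.aeval (linearForm a) p) =
      C (a i) * Polynomial.aeval (linearForm a) (Polynomial.derivative p) := by
  rw [Derivation.map_aeval, pderiv_linearForm, smul_eq_mul, mul_comm]

theorem pderiv_pow_aeval_linearForm (a : Fin n → ℂ) (i : Fin n) (k : ℕ) (p : Polynomial ℂ) :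
    ((pderiv i).toLinearMap ^ k) (Polynomial.aeval (linearForm a) p) =
      C (a i ^ k) * Polynomial.aeval (linearForm a) (Polynomial.derivative^[k] p) := by
  induction k generalizing p with
  | zero => simp
  | succ k ih =>
    rw [pow_succ, Module.End.mul_apply, Derivation.coeFn_coe, pderiv_aeval_linearForm, C_mul',
      map_smul, ih, Function.iterate_succ_apply, ← C_mul', ← mul_assoc, ← map_mul, pow_succ']

theorem list_prod_pderiv_pow_aeval_linearForm (a : Fin n → ℂ) (L : List (Fin n × ℕ))
    (p : Polynomial ℂ) :
    (L.map fun q => (pderiv q.1).toLinearMap ^ q.2).prod (Polynomial.aeval (linearForm a) p) =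
      C (L.map fun q => a q.1 ^ q.2).prod *
        Polynomial.aeval (linearForm a) (Polynomial.derivative^[(L.map Prod.snd).sum] p) := by
  induction L generalizing p with
  | nil => simp
  | cons q L ih =>
    rw [List.map_cons, List.prod_cons, Module.End.mul_apply, ih, C_mul', map_smul,
      pderiv_pow_aeval_linearForm, List.map_cons, List.prod_cons, List.map_cons, List.sum_cons,
      Function.iterate_add_apply, ← C_mul', ← mul_assoc, ← map_mul, mul_comm (List.prod _)]

theorem ofFn_prod_pderiv_pow_aeval_linearForm (a : Fin n → ℂ) (m : Fin n →₀ ℕ)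
    (p : Polynomial ℂ) :
    (List.ofFn fun i => (pderiv i).toLinearMap ^ m i).prod (Polynomial.aeval (linearForm a) p) =
      C (∏ i, a i ^ m i) *
        Polynomial.aeval (linearForm a) (Polynomial.derivative^[m.degree] p) := by
  simpa [List.map_map, Function.comp_def, ← List.ofFn_eq_map, List.prod_ofFn, List.sum_ofFn,
    Finsupp.degree_eq_sum] using
    list_prod_pderiv_pow_aeval_linearForm a ((List.finRange n).map fun i => (i, m i)) p

theorem diffOp_aeval_linearForm {g : MvPolynomial (Fin n) ℂ} {k : ℕ} (hg : g.IsHomogeneous k)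
    (a : Fin n → ℂ) (p : Polynomial ℂ) :
    diffOp g (Polynomial.aeval (linearForm a) p) =
      C (eval a g) * Polynomial.aeval (linearForm a) (Polynomial.derivative^[k] p) := by
  rw [diffOp, eval_eq', map_sum, Finset.sum_mul]
  refine Finset.sum_congr rfl fun m hm => ?_
  have hmk : m.degree = k := by
    by_contra h
    exact mem_support_iff.mp hm (hg.coeff_eq_zero h)
  rw [ofFn_prod_pderiv_pow_aeval_linearForm, hmk, ← C_mul', ← mul_assoc, ← map_mul]

theorem diffOp_linearForm_pow {g : MvPolynomial (Fin n) ℂ} {k : ℕ} (hg : g.IsHomogeneous k)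
    (a : Fin n → ℂ) (d : ℕ) :
    diffOp g (linearForm a ^ d) = C (d.descFactorial k * eval a g) * linearForm a ^ (d - k) := by
  have := diffOp_aeval_linearForm hg a (Polynomial.X ^ d)
  rw [Polynomial.iterate_derivative_X_pow_eq_smul] at this
  simpa [smul_eq_C_mul, mul_comm, mul_left_comm, mul_assoc] using this

theorem diffOp_add_right (g f₁ f₂ : MvPolynomial (Fin n) ℂ) :
    diffOp g (f₁ + f₂) = diffOp g f₁ + diffOp g f₂ := by
  simp only [diffOp, map_add, smul_add, Finset.sum_add_distrib]

theorem diffOp_C_mul_right (g f : MvPolynomial (Fin n) ℂ) (c : ℂ) :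
    diffOp g (C c * f) = C c * diffOp g f := by
  simp only [diffOp, C_mul', map_smul, smul_comm c, Finset.smul_sum]

end Apolarity

theorem MvPolynomial.IsHomogeneous.eq_sum_fin_two {R : Type*} [CommSemiring R]
    {g : MvPolynomial (Fin 2) R} {k : ℕ} (hg : g.IsHomogeneous k) :
    g = ∑ j ∈ Finset.range (k + 1),
      C (coeff (Finsupp.single 0 (k - j) + Finsupp.single 1 j) g) * X 0 ^ (k - j) * X 1 ^ j := by
  set φ : ℕ → Fin 2 →₀ ℕ := fun j => Finsupp.single 0 (k - j) + Finsupp.single 1 j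
  have hφ : Set.InjOn φ (Finset.range (k + 1)) := fun i _ j _ h => by
    simpa [φ] using DFunLike.congr_fun h 1
  have hsupp : g.support ⊆ (Finset.range (k + 1)).image φ := by
    intro m hm
    have hmk : m 0 + m 1 = k := by
      by_contra h
      exact mem_support_iff.mp hm (hg.coeff_eq_zero (by simpa [Finsupp.degree_eq_sum] using h))
    refine Finset.mem_image.mpr ⟨m 1, Finset.mem_range.mpr (by omega), ?_⟩
    ext i
    fin_cases i <;> simp [φ]
    omega
  calc g = ∑ m ∈ (Finset.range (k + 1)).image φ, monomial m (coeff m g) := by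
        rw [← Finset.sum_subset hsupp fun m _ hm => by rw [notMem_support_iff.mp hm, map_zero]]
        exact as_sum g
    _ = _ := by
      rw [Finset.sum_image hφ]
      refine Finset.sum_congr rfl fun j _ => ?_
      simp [φ, X_pow_eq_monomial, C_mul_monomial, monomial_mul]

namespace Apolarity

theorem C_mul_X_pow_add_eq_zero_iff {k : ℕ} (hk : 2 ≤ k) (u v w : ℂ) :
    C u * X 0 ^ k + C v * X 1 ^ k + C w * (X 0 + X 1) ^ k = (0 : MvPolynomial (Fin 2) ℂ) ↔
      u = 0 ∧ v = 0 ∧ w = 0 := by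
  refine ⟨fun h => ?_, by rintro ⟨rfl, rfl, rfl⟩; simp⟩
  have hk0 : k ≠ 0 := by omega
  have h₁ : u + w = 0 := by simpa [hk0] using congrArg (eval ![1, 0]) h
  have h₂ : v + w = 0 := by simpa [hk0] using congrArg (eval ![0, 1]) h
  have h₃ : u + v + w * 2 ^ k = 0 := by
    simpa [one_add_one_eq_two] using congrArg (eval ![1, 1]) h
  have h2k : (2 : ℂ) ^ k ≠ 2 := by
    have : 2 < 2 ^ k := (Nat.lt_pow_self one_lt_two).trans_le (Nat.pow_le_pow_right two_pos hk)
    exact_mod_cast this.ne'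
  have hw : w = 0 := by
    have : w * ((2 : ℂ) ^ k - 2) = 0 := by linear_combination h₃ - h₁ - h₂
    exact (mul_eq_zero.mp this).resolve_right (sub_ne_zero.mpr h2k)
  exact ⟨by linear_combination h₁ - hw, by linear_combination h₂ - hw, hw⟩

theorem diffOp_three_powers {g : MvPolynomial (Fin 2) ℂ} {k : ℕ} (hg : g.IsHomogeneous k)
    (d : ℕ) (α β : ℂ) :
    diffOp g (X 0 ^ d + C α * X 1 ^ d + C β * (X 0 + X 1) ^ d) =
      C (d.descFactorial k : ℂ) *
        (C (eval ![1, 0] g) * X 0 ^ (d - k) + C (α * eval ![0, 1] g) * X 1 ^ (d - k) +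
          C (β * eval ![1, 1] g) * (X 0 + X 1) ^ (d - k)) := by
  have hℓ (a : Fin 2 → ℂ) : linearForm a = C (a 0) * X 0 + C (a 1) * X 1 := by
    simp [linearForm, Fin.sum_univ_two]
  have h₀ := diffOp_linearForm_pow hg ![1, 0] d
  have h₁ := diffOp_linearForm_pow hg ![0, 1] d
  have h₂ := diffOp_linearForm_pow hg ![1, 1] d
  simp only [hℓ, Matrix.cons_val_zero, Matrix.cons_val_one, map_one, map_zero, one_mul, zero_mul,
    add_zero, zero_add] at h₀ h₁ h₂
  rw [diffOp_add_right, diffOp_add_right, diffOp_C_mul_right, diffOp_C_mul_right, h₀, h₁, h₂]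
  simp only [map_mul]
  ring

theorem diffOp_three_powers_eq_zero_iff {d : ℕ} (hd : 5 ≤ d) {α β : ℂ} (hα : α ≠ 0)
    (hβ : β ≠ 0) {g : MvPolynomial (Fin 2) ℂ} (hg : g.IsHomogeneous 3) :
    diffOp g (X 0 ^ d + C α * X 1 ^ d + C β * (X 0 + X 1) ^ d) = 0 ↔
      eval ![1, 0] g = 0 ∧ eval ![0, 1] g = 0 ∧ eval ![1, 1] g = 0 := by
  have hN : (d.descFactorial 3 : ℂ) ≠ 0 :=
    Nat.cast_ne_zero.mpr (Nat.descFactorial_pos.mpr (by omega)).ne'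
  rw [diffOp_three_powers hg, mul_eq_zero, C_eq_zero, or_iff_right hN,
    C_mul_X_pow_add_eq_zero_iff (by omega), mul_eq_zero, mul_eq_zero, or_iff_right hα,
    or_iff_right hβ]

theorem mem_span_cubic_iff (g : MvPolynomial (Fin 2) ℂ) :
    g ∈ Submodule.span ℂ {X 0 ^ 2 * X 1 - X 0 * X 1 ^ 2} ↔
      g.IsHomogeneous 3 ∧ eval ![1, 0] g = 0 ∧ eval ![0, 1] g = 0 ∧ eval ![1, 1] g = 0 := by
  rw [Submodule.mem_span_singleton]
  constructor
  · rintro ⟨c, rfl⟩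
    have hv : (X 0 ^ 2 * X 1 - X 0 * X 1 ^ 2 : MvPolynomial (Fin 2) ℂ).IsHomogeneous 3 :=
      (((isHomogeneous_X ℂ 0).pow 2).mul (isHomogeneous_X ℂ 1)).sub
        ((isHomogeneous_X ℂ 0).mul ((isHomogeneous_X ℂ 1).pow 2))
    refine ⟨?_, by simp, by simp, by simp⟩
    rw [smul_eq_C_mul]
    exact (isHomogeneous_C _ c).mul hv
  · rintro ⟨hg, h₀, h₁, h₂⟩
    obtain ⟨c₀, c₁, c₂, c₃, rfl⟩ : ∃ c₀ c₁ c₂ c₃ : ℂ,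
        g = C c₀ * X 0 ^ 3 + C c₁ * X 0 ^ 2 * X 1 + C c₂ * X 0 * X 1 ^ 2 + C c₃ * X 1 ^ 3 :=
      ⟨_, _, _, _, by simpa [Finset.sum_range_succ] using hg.eq_sum_fin_two⟩
    norm_num at h₀ h₁ h₂
    refine ⟨c₁, ?_⟩
    rw [h₀, h₁, show c₂ = -c₁ by linear_combination h₂ - h₀ - h₁, smul_eq_C_mul]
    simp only [map_zero, map_neg]
    ring

end Apolarity

theorem stmt_15 (d : ℕ) (hd : 5 ≤ d) (α β : ℂ) (hα : α ≠ 0) (hβ : β ≠ 0)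
    (f : MvPolynomial (Fin 2) ℂ)
    (hf : f = X 0 ^ d + C α * X 1 ^ d + C β * (X 0 + X 1) ^ d) :
    {g : MvPolynomial (Fin 2) ℂ | g.IsHomogeneous 3 ∧ diffOp g f = 0} =
      ↑(Submodule.span ℂ
        ({X 0 ^ 2 * X 1 - X 0 * X 1 ^ 2} : Set (MvPolynomial (Fin 2) ℂ))) := by
  ext g
  rw [Set.mem_ofPred_eq, SetLike.mem_coe, Apolarity.mem_span_cubic_iff, hf]
  exact and_congr_right (Apolarity.diffOp_three_powers_eq_zero_iff hd hα hβ)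
end
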